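/- arXiv:1907.00768 — 3 statements merged into one kernel-verified Lean document; each statement's English description precedes it below -/
import Mathlib

section
/- The explicit cylindrical fields satisfy the angular momentum equation of the axisymmetric MHD system: for every ν ≥ 0 and all t ∈ [0,T*), r > 0, z ∈ ℝ, ∂_t v^θ + v^r ∂_r v^θ + v^z ∂_z v^θ + (1/r) v^r v^θ = ν(Δ − 1/r²)v^θ + H^r ∂_r H^θ + H^z ∂_z H^θ + (1/r) H^θ H^r. -/
/-!
Both sides vanish identically. The swirl `v^θ = Ω(t) r` is a rigid rotation, so it is killed by
`Δ − 1/r²`, and its transport terms cancel because `Ω' = −2aΩ/(T−t)` is balanced by the stretching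
`2 v^r / r = 2a/(T−t)`. For `H^θ = c r z` the field `H^r ∂_r + H^z ∂_z` produces `(1 − 2) ā c r z`,
which the term `H^θ H^r / r = ā c r z` cancels.
-/

/-- Partial derivative in the radial variable. -/
noncomputable def dr (f : ℝ → ℝ → ℝ) (r z : ℝ) : ℝ := deriv (fun s => f s z) r

/-- Partial derivative in the vertical variable. -/
noncomputable def dz (f : ℝ → ℝ → ℝ) (r z : ℝ) : ℝ := deriv (fun s => f r s) z

/-- The axisymmetric Laplacian `Δ = ∂_r² + (1/r)∂_r + ∂_z²`. -/
noncomputable def cylLap (f : ℝ → ℝ → ℝ) (r z : ℝ) : ℝ :=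
  deriv (fun s => dr f s z) r + (1 / r) * dr f r z + deriv (fun s => dz f r s) z

/-- Radial velocity `v^r = a r / (T − t)`. -/
noncomputable def vr (T a : ℝ) (t r z : ℝ) : ℝ := a * r / (T - t)

/-- Angular velocity `v^θ = k r (T − t)^{2a}`. -/
noncomputable def vtheta (T a k : ℝ) (t r z : ℝ) : ℝ := k * r * (T - t) ^ (2 * a)

/-- Vertical velocity `v^z = −2 a z / (T − t)`. -/
noncomputable def vz (T a : ℝ) (t r z : ℝ) : ℝ := -2 * a * z / (T - t)

/-- Radial magnetic field `H^r = ā r`. -/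
noncomputable def Hr (ab : ℝ) (t r z : ℝ) : ℝ := ab * r

/-- Angular magnetic field `H^θ = (2āk/(4a+1)) r z (T − t)^{2a+1}`. -/
noncomputable def Htheta (T a ab k : ℝ) (t r z : ℝ) : ℝ :=
  2 * ab * k * r * z * (T - t) ^ (2 * a + 1) / (4 * a + 1)

/-- Vertical magnetic field `H^z = −2 ā z`. -/
noncomputable def Hz (ab : ℝ) (t r z : ℝ) : ℝ := -2 * ab * z

lemma dr_eq_of_affine {f : ℝ → ℝ → ℝ} {c d z : ℝ} (hf : ∀ s, f s z = c * s + d) (r : ℝ) :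
    dr f r z = c := by
  simp [dr, hf]

lemma dz_eq_of_affine {f : ℝ → ℝ → ℝ} {c d r : ℝ} (hf : ∀ s, f r s = c * s + d) (z : ℝ) :
    dz f r z = c := by
  simp [dz, hf]

lemma cylLap_sub_div_sq_eq_zero {f : ℝ → ℝ → ℝ} {c : ℝ} (hf : ∀ r z, f r z = c * r)
    (r z : ℝ) : cylLap f r z - f r z / r ^ 2 = 0 := by
  have hdr : ∀ s w, dr f s w = c := fun s w =>
    dr_eq_of_affine (d := 0) (fun _ => by simp [hf]) s
  have hdz : ∀ s, dz f r s = 0 := dz_eq_of_affine (d := c * r) (fun _ => by simp [hf])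
  simp only [cylLap, hdr, hdz, deriv_const', hf]
  rcases eq_or_ne r 0 with rfl | hr
  · simp
  · field_simp
    ring

lemma magnetic_terms_eq_zero {f : ℝ → ℝ → ℝ} {c : ℝ} (hf : ∀ r z, f r z = c * r * z)
    (ab t r z : ℝ) :
    Hr ab t r z * dr f r z + Hz ab t r z * dz f r z + (1 / r) * f r z * Hr ab t r z = 0 := by
  rw [dr_eq_of_affine (c := c * z) (d := 0) (fun _ => by rw [hf]; ring),
    dz_eq_of_affine (c := c * r) (d := 0) (fun _ => by rw [hf]; ring), hf]
  simp only [Hr, Hz]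
  rcases eq_or_ne r 0 with rfl | hr
  · simp
  · field_simp
    ring

lemma hasDerivAt_rpow_const_sub {T p t : ℝ} (ht : t ≠ T) :
    HasDerivAt (fun s => (T - s) ^ p) (-(p * (T - t) ^ (p - 1))) t := by
  have hpow := Real.hasDerivAt_rpow_const (p := p) (Or.inl (sub_ne_zero.mpr ht.symm))
  simpa [Function.comp_def] using hpow.comp t ((hasDerivAt_id t).const_sub T)

lemma vtheta_transport_eq_zero (T a k : ℝ) {t : ℝ} (ht : t ≠ T) (r z : ℝ) :
    deriv (fun s => vtheta T a k s r z) t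
        + vr T a t r z * dr (vtheta T a k t) r z
        + vz T a t r z * dz (vtheta T a k t) r z
        + (1 / r) * vr T a t r z * vtheta T a k t r z = 0 := by
  have hτ : T - t ≠ 0 := sub_ne_zero.mpr ht.symm
  have hdt : deriv (fun s => vtheta T a k s r z) t = -(k * r * (2 * a * (T - t) ^ (2 * a - 1))) :=
    ((hasDerivAt_rpow_const_sub ht).const_mul (k * r)).deriv.trans (mul_neg _ _)
  rw [hdt,
    dr_eq_of_affine (c := k * (T - t) ^ (2 * a)) (d := 0) (fun _ => by simp only [vtheta]; ring),
    dz_eq_of_affine (c := 0) (d := vtheta T a k t r z) (fun _ => by simp only [vtheta]; ring),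
    Real.rpow_sub_one hτ]
  simp only [vr, vz, vtheta]
  rcases eq_or_ne r 0 with rfl | hr
  · simp
  · field_simp
    ring

theorem angular_momentum_equation_general (T a ab k : ℝ) :
    ∀ ν : ℝ, 0 ≤ ν →
    ∀ t ∈ Set.Ico (0 : ℝ) T, ∀ r ∈ Set.Ioi (0 : ℝ), ∀ z : ℝ,
      deriv (fun s => vtheta T a k s r z) t
          + vr T a t r z * dr (vtheta T a k t) r z
          + vz T a t r z * dz (vtheta T a k t) r z
          + (1 / r) * vr T a t r z * vtheta T a k t r z
        = ν * (cylLap (vtheta T a k t) r z - vtheta T a k t r z / r ^ 2)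
          + Hr ab t r z * dr (Htheta T a ab k t) r z
          + Hz ab t r z * dz (Htheta T a ab k t) r z
          + (1 / r) * Htheta T a ab k t r z * Hr ab t r z := by
  intro ν _ t ht r _ z
  have hvθ : ∀ r z, vtheta T a k t r z = k * (T - t) ^ (2 * a) * r := fun r z => by
    simp only [vtheta]; ring
  have hHθ : ∀ r z,
      Htheta T a ab k t r z = 2 * ab * k * (T - t) ^ (2 * a + 1) / (4 * a + 1) * r * z :=
    fun r z => by simp only [Htheta]; ring
  linear_combination vtheta_transport_eq_zero T a k ht.2.ne r z
    - ν * cylLap_sub_div_sq_eq_zero hvθ r z - magnetic_terms_eq_zero hHθ ab t r z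

/-- the angular momentum equation of the axisymmetric MHD system
holds for the explicit fields. -/
theorem angular_momentum_equation (T a ab k : ℝ) (hT : 0 < T)
    (hk : k ≠ 0) (hab : ab ≠ 0) (ha : a ≠ 0) (ha' : a ≠ -(1 / 4)) :
    ∀ ν : ℝ, 0 ≤ ν →
    ∀ t ∈ Set.Ico (0 : ℝ) T, ∀ r ∈ Set.Ioi (0 : ℝ), ∀ z : ℝ,
      deriv (fun s => vtheta T a k s r z) t
          + vr T a t r z * dr (vtheta T a k t) r z
          + vz T a t r z * dz (vtheta T a k t) r z
          + (1 / r) * vr T a t r z * vtheta T a k t r z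
        = ν * (cylLap (vtheta T a k t) r z - vtheta T a k t r z / r ^ 2)
          + Hr ab t r z * dr (Htheta T a ab k t) r z
          + Hz ab t r z * dz (Htheta T a ab k t) r z
          + (1 / r) * Htheta T a ab k t r z * Hr ab t r z :=
  angular_momentum_equation_general T a ab k
end

section
/- The explicit cylindrical fields satisfy the radial component of the induction equation: for every μ ≥ 0 and all t ∈ [0,T*), r > 0, z ∈ ℝ, ∂_t H^r + v^r ∂_r H^r + v^z ∂_z H^r = μ(Δ − 1/r²)H^r + H^r ∂_r v^r + H^z ∂_z v^r. -/
section RadialFields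

variable (T a ab t r z : ℝ)

theorem deriv_Hr_time : deriv (fun s => Hr ab s r z) t = 0 :=
  deriv_const t _

theorem dr_Hr : dr (Hr ab t) r z = ab := by
  simp [dr, Hr]

theorem dz_Hr : dz (Hr ab t) r z = 0 :=
  deriv_const z _

theorem dr_vr : dr (vr T a t) r z = a / (T - t) := by
  simp [dr, vr, div_eq_mul_inv]

theorem dz_vr : dz (vr T a t) r z = 0 :=
  deriv_const z _

theorem cylLap_Hr : cylLap (Hr ab t) r z = ab / r := by
  simp only [cylLap, dr_Hr, dz_Hr, deriv_const]
  ring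

-- Holds at `r = 0` too, where both terms are `0` by `x / 0 = 0`.
theorem cylLap_sub_Hr_div_sq : cylLap (Hr ab t) r z - Hr ab t r z / r ^ 2 = 0 := by
  rw [cylLap_Hr, Hr, sq, mul_div_assoc, div_self_mul_self', div_eq_mul_inv, sub_self]

end RadialFields

theorem radial_induction_equation_general (T a ab : ℝ) :
    ∀ μ : ℝ, 0 ≤ μ →
    ∀ t ∈ Set.Ico (0 : ℝ) T, ∀ r ∈ Set.Ioi (0 : ℝ), ∀ z : ℝ,
      deriv (fun s => Hr ab s r z) t
          + vr T a t r z * dr (Hr ab t) r z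
          + vz T a t r z * dz (Hr ab t) r z
        = μ * (cylLap (Hr ab t) r z - Hr ab t r z / r ^ 2)
          + Hr ab t r z * dr (vr T a t) r z
          + Hz ab t r z * dz (vr T a t) r z := by
  intro μ _ t _ r _ z
  rw [deriv_Hr_time, dr_Hr, dz_Hr, cylLap_sub_Hr_div_sq, dr_vr, dz_vr, vr, Hr]
  ring

/-- the radial component of the induction equation holds for the
explicit fields. -/
theorem radial_induction_equation (T a ab k : ℝ) (hT : 0 < T)
    (hk : k ≠ 0) (hab : ab ≠ 0) (ha : a ≠ 0) (ha' : a ≠ -(1 / 4)) :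
    ∀ μ : ℝ, 0 ≤ μ →
    ∀ t ∈ Set.Ico (0 : ℝ) T, ∀ r ∈ Set.Ioi (0 : ℝ), ∀ z : ℝ,
      deriv (fun s => Hr ab s r z) t
          + vr T a t r z * dr (Hr ab t) r z
          + vz T a t r z * dz (Hr ab t) r z
        = μ * (cylLap (Hr ab t) r z - Hr ab t r z / r ^ 2)
          + Hr ab t r z * dr (vr T a t) r z
          + Hz ab t r z * dz (vr T a t) r z :=
  radial_induction_equation_general T a ab
end

section
/- The explicit cylindrical fields satisfy the vertical component of the induction equation: for every μ ≥ 0 and all t ∈ [0,T*), r > 0, z ∈ ℝ, ∂_t H^z + v^r ∂_r H^z + v^z ∂_z H^z = μ Δ H^z + H^r ∂_r v^z + H^z ∂_z v^z. -/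
/-! `H^z` and `v^z` are independent of `r` and linear in `z`, so all their `r`-derivatives and the
Laplacian of `H^z` vanish, and the equation reduces to `v^z · (−2ā) = H^z · (−2a/(T* − t))`. -/

section RadiallyConstant

variable (g : ℝ → ℝ) (r z : ℝ)

theorem dr_radially_constant : dr (fun _ => g) r z = 0 := deriv_const r (g z)

theorem dz_radially_constant : dz (fun _ => g) r z = deriv g z := rfl

theorem cylLap_radially_constant : cylLap (fun _ => g) r z = deriv (deriv g) z := by
  simp only [cylLap, dr_radially_constant, deriv_const, mul_zero, zero_add, add_zero]
  rfl

end RadiallyConstant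

theorem vz_eq_const_mul (T a t : ℝ) : vz T a t = fun _ z => -2 * a / (T - t) * z := by
  ext r z
  simp only [vz]
  ring

theorem vertical_induction_equation_general (T a ab : ℝ) :
    ∀ μ : ℝ, 0 ≤ μ →
    ∀ t ∈ Set.Ico (0 : ℝ) T, ∀ r ∈ Set.Ioi (0 : ℝ), ∀ z : ℝ,
      deriv (fun s => Hz ab s r z) t
          + vr T a t r z * dr (Hz ab t) r z
          + vz T a t r z * dz (Hz ab t) r z
        = μ * cylLap (Hz ab t) r z
          + Hr ab t r z * dr (vz T a t) r z
          + Hz ab t r z * dz (vz T a t) r z := by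
  intro μ _ t _ r _ z
  have hHz : Hz ab t = fun _ z => -2 * ab * z := rfl
  have hHz_time : deriv (fun s => Hz ab s r z) t = 0 := deriv_const t _
  rw [hHz_time, hHz, vz_eq_const_mul, dr_radially_constant, dr_radially_constant,
    dz_radially_constant, dz_radially_constant, cylLap_radially_constant, deriv_const_mul_id',
    deriv_const_mul_id', deriv_const]
  ring

/-- the vertical component of the induction equation holds for the
explicit fields. -/
theorem vertical_induction_equation (T a ab k : ℝ) (hT : 0 < T)
    (hk : k ≠ 0) (hab : ab ≠ 0) (ha : a ≠ 0) (ha' : a ≠ -(1 / 4)) :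
    ∀ μ : ℝ, 0 ≤ μ →
    ∀ t ∈ Set.Ico (0 : ℝ) T, ∀ r ∈ Set.Ioi (0 : ℝ), ∀ z : ℝ,
      deriv (fun s => Hz ab s r z) t
          + vr T a t r z * dr (Hz ab t) r z
          + vz T a t r z * dz (Hz ab t) r z
        = μ * cylLap (Hz ab t) r z
          + Hr ab t r z * dr (vz T a t) r z
          + Hz ab t r z * dz (vz T a t) r z :=
  vertical_induction_equation_general T a ab
end
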